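/- Let ABC be a generalized hyperbolic triangle with one ideal vertex C and finite angles α, β ∈ ℚπ at A and B, with finite side length c between A and B. Then c is transcendental. -/
import Mathlib

open Real

private lemma algQ_add {x y : ℂ} (hx : IsAlgebraic ℚ x) (hy : IsAlgebraic ℚ y) :
    IsAlgebraic ℚ (x + y) := by
  rw [isAlgebraic_iff_isIntegral] at *
  exact hx.add hy

private lemma algQ_sub {x y : ℂ} (hx : IsAlgebraic ℚ x) (hy : IsAlgebraic ℚ y) :
    IsAlgebraic ℚ (x - y) := by
  rw [isAlgebraic_iff_isIntegral] at *
  exact hx.sub hy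

private lemma algQ_neg {x : ℂ} (hx : IsAlgebraic ℚ x) : IsAlgebraic ℚ (-x) := by
  rw [isAlgebraic_iff_isIntegral] at *
  exact hx.neg

private lemma algQ_mul {x y : ℂ} (hx : IsAlgebraic ℚ x) (hy : IsAlgebraic ℚ y) :
    IsAlgebraic ℚ (x * y) := by
  rw [isAlgebraic_iff_isIntegral] at *
  exact hx.mul hy

private lemma algQ_two_inv : IsAlgebraic ℚ ((2 : ℂ)⁻¹) :=
  (show IsAlgebraic ℚ (2 : ℂ) by exact_mod_cast isAlgebraic_rat ℚ 2).inv

private lemma algQ_I : IsAlgebraic ℚ (Complex.I) :=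
  ⟨Polynomial.X ^ 2 + Polynomial.C 1,
    fun h => by simpa using congrArg (Polynomial.eval (0 : ℚ)) h,
    by simp [Complex.I_sq]⟩

private lemma alg_exp_ratpi {θ : ℝ} (h : ∃ q : ℚ, θ = (q : ℝ) * π) :
    IsAlgebraic ℚ (Complex.exp (θ * Complex.I)) := by
  obtain ⟨q, rfl⟩ := h
  have hd : (q : ℂ) * (q.den : ℂ) = (q.num : ℂ) := by
    exact_mod_cast congrArg (Rat.cast (K := ℂ)) (Rat.mul_den_eq_num q)
  have key : ((2 * q.den : ℕ) : ℂ) * ((((q : ℝ) * π : ℝ) : ℂ) * Complex.I)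
      = (q.num : ℂ) * (2 * (π : ℂ) * Complex.I) := by
    push_cast
    linear_combination (2 * (π : ℂ) * Complex.I) * hd
  have hpow : Complex.exp (((q : ℝ) * π : ℝ) * Complex.I) ^ (2 * q.den) = 1 := by
    rw [← Complex.exp_nat_mul, key, Complex.exp_int_mul_two_pi_mul_I]
  refine ⟨Polynomial.X ^ (2 * q.den) - Polynomial.C 1,
    Polynomial.X_pow_sub_C_ne_zero (by positivity) 1, ?_⟩
  simp only [map_sub, map_pow, Polynomial.aeval_X, Polynomial.aeval_C, map_one]
  rw [sub_eq_zero]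
  push_cast at hpow ⊢
  exact hpow

private lemma alg_cos_ratpi {θ : ℝ} (h : ∃ q : ℚ, θ = (q : ℝ) * π) :
    IsAlgebraic ℚ (Complex.cos θ) := by
  have hz := alg_exp_ratpi h
  have e : Complex.cos (θ : ℂ) = (Complex.exp ((θ : ℂ) * Complex.I)
      + (Complex.exp ((θ : ℂ) * Complex.I))⁻¹) * (2 : ℂ)⁻¹ := by
    rw [Complex.cos, ← Complex.exp_neg]
    ring_nf
  rw [e]
  exact algQ_mul (algQ_add hz hz.inv) algQ_two_inv

private lemma alg_sin_ratpi {θ : ℝ} (h : ∃ q : ℚ, θ = (q : ℝ) * π) :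
    IsAlgebraic ℚ (Complex.sin θ) := by
  have hz := alg_exp_ratpi h
  have e : Complex.sin (θ : ℂ) = ((Complex.exp ((θ : ℂ) * Complex.I))⁻¹
      - Complex.exp ((θ : ℂ) * Complex.I)) * Complex.I * (2 : ℂ)⁻¹ := by
    rw [Complex.sin, ← Complex.exp_neg]
    ring_nf
  rw [e]
  exact algQ_mul (algQ_mul (algQ_sub hz.inv hz) algQ_I) algQ_two_inv

theorem ideal_vertex_triangle_transcendental_side
    (lindemann : ∀ (n : ℕ) (α c : Fin n → ℂ), Function.Injective α →
      (∀ i, IsAlgebraic ℚ (α i)) → (∀ i, IsAlgebraic ℚ (c i)) →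
      (∑ i, c i * Complex.exp (α i)) = 0 → ∀ i, c i = 0)
    (α β c : ℝ) (hc : 0 < c)
    (hα : α ∈ Set.Ioo 0 π) (hβ : β ∈ Set.Ioo 0 π)
    (hαQ : ∃ q : ℚ, α = (q : ℝ) * π) (hβQ : ∃ q : ℚ, β = (q : ℝ) * π)
    (hrel : Real.cosh c = (1 + Real.cos α * Real.cos β) / (Real.sin α * Real.sin β)) :
    Transcendental ℚ c := by
  intro halg
  have hcC : IsAlgebraic ℚ ((c : ℝ) : ℂ) :=
    (isAlgebraic_algebraMap_iff (algebraMap ℝ ℂ).injective).mpr halg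
  have hsa : Real.sin α ≠ 0 := ne_of_gt (Real.sin_pos_of_pos_of_lt_pi hα.1 hα.2)
  have hsb : Real.sin β ≠ 0 := ne_of_gt (Real.sin_pos_of_pos_of_lt_pi hβ.1 hβ.2)
  have hcosh : IsAlgebraic ℚ ((Real.cosh c : ℂ)) := by
    have e : (Real.cosh c : ℂ) = (1 + Complex.cos α * Complex.cos β)
        * (Complex.sin α * Complex.sin β)⁻¹ := by
      rw [hrel]
      push_cast
      rw [div_eq_mul_inv]
    rw [e]
    exact algQ_mul (algQ_add (by exact_mod_cast isAlgebraic_rat ℚ 1)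
        (algQ_mul (alg_cos_ratpi hαQ) (alg_cos_ratpi hβQ)))
      (algQ_mul (alg_sin_ratpi hαQ) (alg_sin_ratpi hβQ)).inv
  have hc0 : (c : ℂ) ≠ 0 := by exact_mod_cast hc.ne'
  have hcne : (c : ℂ) ≠ -(c : ℂ) := by
    intro h
    apply hc0
    have h2 : (2 : ℂ) * c = 0 := by linear_combination h
    simpa using h2
  have hneg0 : -(c : ℂ) ≠ 0 := by simpa using hc0
  have hinj : Function.Injective (![(c : ℂ), -(c : ℂ), 0] : Fin 3 → ℂ) := by
    intro i j hij
    fin_cases i <;> fin_cases j <;>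
      simp only [Matrix.cons_val_zero, Matrix.cons_val_one, Matrix.head_cons,
        Matrix.cons_val_two, Matrix.tail_cons] at hij <;>
      first
        | rfl
        | exact absurd hij hcne
        | exact absurd hij.symm hcne
        | exact absurd hij hc0
        | exact absurd hij.symm hc0
        | exact absurd hij hneg0
        | exact absurd hij.symm hneg0
  have hEalg : ∀ i, IsAlgebraic ℚ ((![(c : ℂ), -(c : ℂ), 0] : Fin 3 → ℂ) i) := by
    intro i
    fin_cases i
    · exact hcC
    · exact algQ_neg hcC
    · exact isAlgebraic_zero
  have hKalg : ∀ i, IsAlgebraic ℚ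
      ((![1, 1, -2 * (Real.cosh c : ℂ)] : Fin 3 → ℂ) i) := by
    intro i
    fin_cases i
    · exact isAlgebraic_one
    · exact isAlgebraic_one
    · exact algQ_mul (by exact_mod_cast isAlgebraic_rat ℚ (-2 : ℚ)) hcosh
  have hsum : (∑ i, (![1, 1, -2 * (Real.cosh c : ℂ)] : Fin 3 → ℂ) i *
      Complex.exp ((![(c : ℂ), -(c : ℂ), 0] : Fin 3 → ℂ) i)) = 0 := by
    rw [Fin.sum_univ_three]
    simp only [Matrix.cons_val_zero, Matrix.cons_val_one, Matrix.head_cons,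
      Matrix.cons_val_two, Matrix.tail_cons]
    rw [Real.cosh_eq]
    push_cast [Complex.ofReal_exp]
    rw [Complex.exp_zero]
    ring
  have hz := lindemann 3 _ _ hinj hEalg hKalg hsum 0
  simp only [Matrix.cons_val_zero] at hz
  exact one_ne_zero hz
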